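/- Let τ > 0, c₀ ∈ ℝ with c₀²τ < 1, c₁ ∈ ℝ, θ ∈ [−π, π], T₀, T₁, a⁰, b⁰ ∈ ℝ, and let a¹, b¹ : ℝ → ℝ be continuous bounded functions. Define the constant real matrices A₀ = ((c₀, −1), (−1, c₀τ)), B = diag(1, τ), C̄₀ = ((b⁰, 0), (a⁰, −T₀)), and the matrix function C̄₁(y) = ((b¹(y), 0), (a¹(y), −T₁)). Then there exist constants α, β ≥ 0 such that for every continuously differentiable π-periodic function u : ℝ → ℂ², ( ∫₀^π ‖ c₁( iθ u(y) + π u'(y) ) + B⁻¹ C̄₁(y) u(y) ‖² dy )^{1/2} ≤ α ( ∫₀^π ‖u(y)‖² dy )^{1/2} + β ( ∫₀^π ‖ B⁻¹ A₀ ( iθ u(y) + π u'(y) ) + B⁻¹ C̄₀ u(y) ‖² dy )^{1/2}. That is, the operator L¹_θ u := c₁(iθ + π ∂_y)u + B⁻¹C̄₁(y)u is relatively bounded with respect to L⁰_θ u := B⁻¹A₀(iθ + π ∂_y)u + B⁻¹C̄₀ u in the periodic L² norm. -/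

import Mathlib

open Real Matrix

private lemma sqrt_add_le' {x y : ℝ} (hx : 0 ≤ x) (hy : 0 ≤ y) :
    Real.sqrt (x + y) ≤ Real.sqrt x + Real.sqrt y := by
  have h : Real.sqrt (x + y) ≤ Real.sqrt ((Real.sqrt x + Real.sqrt y) ^ 2) := by
    apply Real.sqrt_le_sqrt
    nlinarith [Real.sq_sqrt hx, Real.sq_sqrt hy, Real.sqrt_nonneg x, Real.sqrt_nonneg y]
  rwa [Real.sqrt_sq (by positivity)] at h

private lemma entry_le_sum (M : Matrix (Fin 2) (Fin 2) ℂ) (i j : Fin 2) :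
    ‖M i j‖ ≤ ‖M 0 0‖ + ‖M 0 1‖ + ‖M 1 0‖ + ‖M 1 1‖ := by
  fin_cases i <;> fin_cases j <;> simp <;>
    nlinarith [norm_nonneg (M 0 0), norm_nonneg (M 0 1),
      norm_nonneg (M 1 0), norm_nonneg (M 1 1)]

private lemma mulVec_norm_le2 (M : Matrix (Fin 2) (Fin 2) ℂ) (K : ℝ)
    (hK : ∀ i j, ‖M i j‖ ≤ K) (v : Fin 2 → ℂ) :
    ‖M.mulVec v‖ ≤ 2 * K * ‖v‖ := by
  have hK0 : 0 ≤ K := (norm_nonneg _).trans (hK 0 0)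
  rw [pi_norm_le_iff_of_nonneg (by positivity)]
  intro i
  have he : M.mulVec v i = M i 0 * v 0 + M i 1 * v 1 := by
    simp [Matrix.mulVec, dotProduct, Fin.sum_univ_two]
  rw [he]
  calc ‖M i 0 * v 0 + M i 1 * v 1‖ ≤ ‖M i 0 * v 0‖ + ‖M i 1 * v 1‖ := norm_add_le _ _
    _ = ‖M i 0‖ * ‖v 0‖ + ‖M i 1‖ * ‖v 1‖ := by rw [norm_mul, norm_mul]
    _ ≤ K * ‖v‖ + K * ‖v‖ := by
        gcongr
        · exact hK i 0
        · exact norm_le_pi_norm v 0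
        · exact hK i 1
        · exact norm_le_pi_norm v 1
    _ = 2 * K * ‖v‖ := by ring


private lemma l2_rel_bound (a b : ℝ) (ha : 0 ≤ a) (hb : 0 ≤ b)
    (f g u : ℝ → Fin 2 → ℂ) (hfc : Continuous f) (hgc : Continuous g) (huc : Continuous u)
    (hpt : ∀ y, ‖f y‖ ≤ a * ‖u y‖ + b * ‖g y‖) :
    Real.sqrt (∫ y in (0:ℝ)..π, ‖f y‖ ^ 2) ≤
      Real.sqrt 2 * a * Real.sqrt (∫ y in (0:ℝ)..π, ‖u y‖ ^ 2) +
      Real.sqrt 2 * b * Real.sqrt (∫ y in (0:ℝ)..π, ‖g y‖ ^ 2) := by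
  have hiu : IntervalIntegrable (fun y => ‖u y‖ ^ 2) MeasureTheory.volume 0 π :=
    (huc.norm.pow 2).intervalIntegrable 0 π
  have hig : IntervalIntegrable (fun y => ‖g y‖ ^ 2) MeasureTheory.volume 0 π :=
    (hgc.norm.pow 2).intervalIntegrable 0 π
  have hif : IntervalIntegrable (fun y => ‖f y‖ ^ 2) MeasureTheory.volume 0 π :=
    (hfc.norm.pow 2).intervalIntegrable 0 π
  have hX0 : 0 ≤ ∫ y in (0:ℝ)..π, ‖u y‖ ^ 2 :=
    intervalIntegral.integral_nonneg Real.pi_pos.le (fun y _ => by positivity)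
  have hY0 : 0 ≤ ∫ y in (0:ℝ)..π, ‖g y‖ ^ 2 :=
    intervalIntegral.integral_nonneg Real.pi_pos.le (fun y _ => by positivity)
  have hZle : (∫ y in (0:ℝ)..π, ‖f y‖ ^ 2) ≤
      2 * a ^ 2 * (∫ y in (0:ℝ)..π, ‖u y‖ ^ 2) + 2 * b ^ 2 * (∫ y in (0:ℝ)..π, ‖g y‖ ^ 2) := by
    have hmono : (∫ y in (0:ℝ)..π, ‖f y‖ ^ 2) ≤
        ∫ y in (0:ℝ)..π, (2 * a ^ 2 * ‖u y‖ ^ 2 + 2 * b ^ 2 * ‖g y‖ ^ 2) := by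
      apply intervalIntegral.integral_mono_on Real.pi_pos.le hif
      · exact ((continuous_const.mul (huc.norm.pow 2)).add
          (continuous_const.mul (hgc.norm.pow 2))).intervalIntegrable 0 π
      · intro y _
        have := hpt y
        nlinarith [norm_nonneg (u y), norm_nonneg (g y), norm_nonneg (f y),
          sq_nonneg (a * ‖u y‖ - b * ‖g y‖)]
    calc (∫ y in (0:ℝ)..π, ‖f y‖ ^ 2)
        ≤ ∫ y in (0:ℝ)..π, (2 * a ^ 2 * ‖u y‖ ^ 2 + 2 * b ^ 2 * ‖g y‖ ^ 2) := hmono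
      _ = 2 * a ^ 2 * (∫ y in (0:ℝ)..π, ‖u y‖ ^ 2)
          + 2 * b ^ 2 * (∫ y in (0:ℝ)..π, ‖g y‖ ^ 2) := by
          rw [intervalIntegral.integral_add (hiu.const_mul _) (hig.const_mul _),
            intervalIntegral.integral_const_mul, intervalIntegral.integral_const_mul]
  calc Real.sqrt (∫ y in (0:ℝ)..π, ‖f y‖ ^ 2)
      ≤ Real.sqrt (2 * a ^ 2 * (∫ y in (0:ℝ)..π, ‖u y‖ ^ 2)
          + 2 * b ^ 2 * (∫ y in (0:ℝ)..π, ‖g y‖ ^ 2)) := Real.sqrt_le_sqrt hZle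
    _ ≤ Real.sqrt (2 * a ^ 2 * (∫ y in (0:ℝ)..π, ‖u y‖ ^ 2))
        + Real.sqrt (2 * b ^ 2 * (∫ y in (0:ℝ)..π, ‖g y‖ ^ 2)) :=
        sqrt_add_le' (by positivity) (by positivity)
    _ = Real.sqrt 2 * a * Real.sqrt (∫ y in (0:ℝ)..π, ‖u y‖ ^ 2)
        + Real.sqrt 2 * b * Real.sqrt (∫ y in (0:ℝ)..π, ‖g y‖ ^ 2) := by
        have e1 : Real.sqrt (2 * a ^ 2 * (∫ y in (0:ℝ)..π, ‖u y‖ ^ 2))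
            = Real.sqrt 2 * a * Real.sqrt (∫ y in (0:ℝ)..π, ‖u y‖ ^ 2) := by
          rw [Real.sqrt_mul (by positivity), Real.sqrt_mul (by norm_num : (0:ℝ) ≤ 2),
            Real.sqrt_sq ha]
        have e2 : Real.sqrt (2 * b ^ 2 * (∫ y in (0:ℝ)..π, ‖g y‖ ^ 2))
            = Real.sqrt 2 * b * Real.sqrt (∫ y in (0:ℝ)..π, ‖g y‖ ^ 2) := by
          rw [Real.sqrt_mul (by positivity), Real.sqrt_mul (by norm_num : (0:ℝ) ≤ 2),
            Real.sqrt_sq hb]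
        rw [e1, e2]

/-- the first-order Bloch operator `L¹_θ u = c₁(iθ + π∂_y)u + B⁻¹Cbar₁(y)u`
is relatively bounded, in the periodic `L²` norm, with respect to the constant-coefficient
operator `L⁰_θ u = B⁻¹A₀(iθ + π∂_y)u + B⁻¹Cbar₀ u`, under the subcharacteristic condition
`c₀²τ < 1`. -/
theorem stmt_10 (τ c₀ c₁ θ T₀ T₁ a0 b0 : ℝ) (hτ : 0 < τ) (hsub : c₀ ^ 2 * τ < 1)
    (hθ : θ ∈ Set.Icc (-π) π)
    (a1 b1 : ℝ → ℝ) (ha1c : Continuous a1) (hb1c : Continuous b1)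
    (Ma : ℝ) (hMa : ∀ y : ℝ, |a1 y| ≤ Ma) (Mb : ℝ) (hMb : ∀ y : ℝ, |b1 y| ≤ Mb)
    (A₀ B Cbar₀ : Matrix (Fin 2) (Fin 2) ℂ) (Cbar₁ : ℝ → Matrix (Fin 2) (Fin 2) ℂ)
    (hA₀ : A₀ = !![(c₀ : ℂ), -1; -1, (c₀ : ℂ) * (τ : ℂ)])
    (hB : B = !![1, 0; 0, (τ : ℂ)])
    (hCbar₀ : Cbar₀ = !![(b0 : ℂ), 0; (a0 : ℂ), -(T₀ : ℂ)])
    (hCbar₁ : ∀ y : ℝ, Cbar₁ y = !![(b1 y : ℂ), 0; (a1 y : ℂ), -(T₁ : ℂ)]) :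
    ∃ α β : ℝ, 0 ≤ α ∧ 0 ≤ β ∧
      ∀ u : ℝ → Fin 2 → ℂ, ContDiff ℝ 1 u → Function.Periodic u π →
        Real.sqrt (∫ y in (0:ℝ)..π,
            ‖(c₁ : ℂ) • ((Complex.I * θ) • u y + (π : ℂ) • deriv u y) +
              (B⁻¹ * Cbar₁ y).mulVec (u y)‖ ^ 2) ≤
          α * Real.sqrt (∫ y in (0:ℝ)..π, ‖u y‖ ^ 2) +
          β * Real.sqrt (∫ y in (0:ℝ)..π,
            ‖(B⁻¹ * A₀).mulVec ((Complex.I * θ) • u y + (π : ℂ) • deriv u y) +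
              (B⁻¹ * Cbar₀).mulVec (u y)‖ ^ 2) := by
  -- determinants
  have hBdet : IsUnit B.det := by
    rw [hB, Matrix.det_fin_two_of]
    simp only [one_mul, mul_zero, sub_zero, zero_mul]
    exact isUnit_iff_ne_zero.mpr (by exact_mod_cast hτ.ne')
  have hAdet : IsUnit A₀.det := by
    rw [hA₀, Matrix.det_fin_two_of]
    apply isUnit_iff_ne_zero.mpr
    have h1 : ((c₀ ^ 2 * τ - 1 : ℝ) : ℂ) ≠ 0 := by
      exact_mod_cast sub_ne_zero.mpr (ne_of_lt hsub)
    intro h; apply h1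
    rw [← h]; push_cast; ring
  have hBB : B * B⁻¹ = 1 := Matrix.mul_nonsing_inv B hBdet
  have hAA : A₀⁻¹ * A₀ = 1 := Matrix.nonsing_inv_mul A₀ hAdet
  -- key inversion identity
  have hkey : ∀ D U : Fin 2 → ℂ,
      (A₀⁻¹ * B).mulVec ((B⁻¹ * A₀).mulVec D + (B⁻¹ * Cbar₀).mulVec U)
        = D + (A₀⁻¹ * Cbar₀).mulVec U := by
    intro D U
    rw [Matrix.mulVec_add, Matrix.mulVec_mulVec, Matrix.mulVec_mulVec]
    have h1 : A₀⁻¹ * B * (B⁻¹ * A₀) = 1 := by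
      rw [Matrix.mul_assoc, ← Matrix.mul_assoc B, hBB, Matrix.one_mul, hAA]
    have h2 : A₀⁻¹ * B * (B⁻¹ * Cbar₀) = A₀⁻¹ * Cbar₀ := by
      rw [Matrix.mul_assoc, ← Matrix.mul_assoc B, hBB, Matrix.one_mul]
    rw [h1, h2, Matrix.one_mulVec]
  -- constants
  set eN : ℝ := ‖(A₀⁻¹*B) 0 0‖ + ‖(A₀⁻¹*B) 0 1‖ + ‖(A₀⁻¹*B) 1 0‖ + ‖(A₀⁻¹*B) 1 1‖ with heN
  set eB : ℝ := ‖(B⁻¹) 0 0‖ + ‖(B⁻¹) 0 1‖ + ‖(B⁻¹) 1 0‖ + ‖(B⁻¹) 1 1‖ with heB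
  set eC : ℝ := ‖(A₀⁻¹*Cbar₀) 0 0‖ + ‖(A₀⁻¹*Cbar₀) 0 1‖ + ‖(A₀⁻¹*Cbar₀) 1 0‖ + ‖(A₀⁻¹*Cbar₀) 1 1‖ with heC
  have heN0 : 0 ≤ eN := by positivity
  have heB0 : 0 ≤ eB := by positivity
  have heC0 : 0 ≤ eC := by positivity
  have hMa0 : 0 ≤ Ma := (abs_nonneg _).trans (hMa 0)
  have hMb0 : 0 ≤ Mb := (abs_nonneg _).trans (hMb 0)
  set KC : ℝ := Ma + Mb + |T₁| with hKC
  have hKC0 : 0 ≤ KC := by positivity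
  have hC1ent : ∀ y, ∀ i j : Fin 2, ‖(Cbar₁ y) i j‖ ≤ KC := by
    intro y i j
    rw [hCbar₁ y]
    fin_cases i <;> fin_cases j <;> simp [Complex.norm_real] <;>
      [skip; skip; skip; skip] <;>
      first
        | (calc |b1 y| ≤ Mb := hMb y
            _ ≤ KC := by rw [hKC]; nlinarith [abs_nonneg T₁])
        | (calc |a1 y| ≤ Ma := hMa y
            _ ≤ KC := by rw [hKC]; nlinarith [abs_nonneg T₁])
        | (rw [hKC]; nlinarith [abs_nonneg T₁])
  set a : ℝ := 2 * eB * (2 * KC) + |c₁| * (2 * eC) with ha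
  set b : ℝ := |c₁| * (2 * eN) with hb'
  have ha0 : 0 ≤ a := by positivity
  have hb0 : 0 ≤ b := by positivity
  refine ⟨Real.sqrt 2 * a, Real.sqrt 2 * b, by positivity, by positivity, ?_⟩
  intro u hu hper
  have huc : Continuous u := hu.continuous
  have hduc : Continuous (deriv u) := hu.continuous_deriv le_rfl
  have hDc : Continuous (fun y => (Complex.I * θ) • u y + (π : ℂ) • deriv u y) :=
    Continuous.add (f := fun y => (Complex.I * θ) • u y) (g := fun y => (π : ℂ) • deriv u y)
      (huc.const_smul (Complex.I * (θ : ℂ))) (hduc.const_smul (π : ℂ))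
  have hmulc : ∀ (M : Matrix (Fin 2) (Fin 2) ℂ) (v : ℝ → Fin 2 → ℂ), Continuous v →
      Continuous (fun y => M.mulVec (v y)) := by
    intro M v hv
    have h1 : Continuous (fun w : Fin 2 → ℂ => M.mulVec w) := by
      have := (Matrix.mulVecLin M).continuous_of_finiteDimensional
      exact this
    exact h1.comp hv
  have hu0 : Continuous (fun y => u y 0) := (continuous_apply _).comp huc
  have hu1 : Continuous (fun y => u y 1) := (continuous_apply _).comp huc
  have hent : ∀ i j : Fin 2, Continuous (fun y => (Cbar₁ y) i j) := by
    intro i j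
    have he2 : (fun y => (Cbar₁ y) i j)
        = fun y => (!![(b1 y : ℂ), 0; (a1 y : ℂ), -(T₁ : ℂ)]) i j := by
      funext y; rw [hCbar₁]
    rw [he2]
    fin_cases i <;> fin_cases j <;> simp only [Matrix.cons_val', Matrix.cons_val_zero,
      Matrix.cons_val_one, Matrix.head_cons, Matrix.empty_val', Matrix.cons_val_fin_one,
      Matrix.head_fin_const]
    · exact Complex.continuous_ofReal.comp hb1c
    · exact continuous_const
    · exact Complex.continuous_ofReal.comp ha1c
    · exact continuous_const
  have hC1c : Continuous (fun y => (Cbar₁ y).mulVec (u y)) := by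
    apply continuous_pi
    intro i
    have he : (fun y => (Cbar₁ y).mulVec (u y) i)
        = fun y => (Cbar₁ y) i 0 * u y 0 + (Cbar₁ y) i 1 * u y 1 := by
      funext y; simp [Matrix.mulVec, dotProduct, Fin.sum_univ_two]
    rw [he]
    exact ((hent i 0).mul hu0).add ((hent i 1).mul hu1)
  have hfc : Continuous (fun y => (c₁ : ℂ) • ((Complex.I * θ) • u y + (π : ℂ) • deriv u y) +
      (B⁻¹ * Cbar₁ y).mulVec (u y)) := by
    have he : (fun y => (c₁ : ℂ) • ((Complex.I * θ) • u y + (π : ℂ) • deriv u y) +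
        (B⁻¹ * Cbar₁ y).mulVec (u y))
        = fun y => (c₁ : ℂ) • ((Complex.I * θ) • u y + (π : ℂ) • deriv u y) +
          B⁻¹.mulVec ((Cbar₁ y).mulVec (u y)) := by
      funext y; rw [Matrix.mulVec_mulVec]
    rw [he]
    exact Continuous.add (f := fun y => (c₁ : ℂ) • ((Complex.I * θ) • u y + (π : ℂ) • deriv u y))
      (hDc.const_smul (c₁ : ℂ)) (hmulc B⁻¹ _ hC1c)
  have hgc : Continuous (fun y =>
      (B⁻¹ * A₀).mulVec ((Complex.I * θ) • u y + (π : ℂ) • deriv u y) +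
      (B⁻¹ * Cbar₀).mulVec (u y)) := (hmulc _ _ hDc).add (hmulc _ _ huc)
  -- pointwise bound
  have hpt : ∀ y, ‖(c₁ : ℂ) • ((Complex.I * θ) • u y + (π : ℂ) • deriv u y) +
      (B⁻¹ * Cbar₁ y).mulVec (u y)‖ ≤ a * ‖u y‖ +
      b * ‖(B⁻¹ * A₀).mulVec ((Complex.I * θ) • u y + (π : ℂ) • deriv u y) +
        (B⁻¹ * Cbar₀).mulVec (u y)‖ := by
    intro y
    set Dv : Fin 2 → ℂ := (Complex.I * θ) • u y + (π : ℂ) • deriv u y with hDv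
    set Gv : Fin 2 → ℂ := (B⁻¹ * A₀).mulVec Dv + (B⁻¹ * Cbar₀).mulVec (u y) with hGv
    have hDy : Dv = (A₀⁻¹ * B).mulVec Gv - (A₀⁻¹ * Cbar₀).mulVec (u y) := by
      rw [hGv, hkey Dv (u y)]; abel
    have hfy : (c₁ : ℂ) • Dv + (B⁻¹ * Cbar₁ y).mulVec (u y)
        = (c₁ : ℂ) • (A₀⁻¹ * B).mulVec Gv
          - (c₁ : ℂ) • (A₀⁻¹ * Cbar₀).mulVec (u y)
          + B⁻¹.mulVec ((Cbar₁ y).mulVec (u y)) := by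
      rw [hDy, smul_sub, Matrix.mulVec_mulVec]
    rw [hfy]
    have h1 : ‖(c₁ : ℂ) • (A₀⁻¹ * B).mulVec Gv‖ ≤ |c₁| * (2 * eN * ‖Gv‖) := by
      rw [norm_smul, Complex.norm_real, Real.norm_eq_abs]
      exact mul_le_mul_of_nonneg_left (mulVec_norm_le2 _ _ (entry_le_sum _) _) (abs_nonneg _)
    have h2 : ‖(c₁ : ℂ) • (A₀⁻¹ * Cbar₀).mulVec (u y)‖ ≤ |c₁| * (2 * eC * ‖u y‖) := by
      rw [norm_smul, Complex.norm_real, Real.norm_eq_abs]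
      exact mul_le_mul_of_nonneg_left (mulVec_norm_le2 _ _ (entry_le_sum _) _) (abs_nonneg _)
    have h3 : ‖B⁻¹.mulVec ((Cbar₁ y).mulVec (u y))‖ ≤ 2 * eB * (2 * KC * ‖u y‖) := by
      calc ‖B⁻¹.mulVec ((Cbar₁ y).mulVec (u y))‖
          ≤ 2 * eB * ‖(Cbar₁ y).mulVec (u y)‖ := mulVec_norm_le2 _ _ (entry_le_sum _) _
        _ ≤ 2 * eB * (2 * KC * ‖u y‖) := by
            gcongr
            exact mulVec_norm_le2 _ _ (hC1ent y) _
    calc ‖(c₁ : ℂ) • (A₀⁻¹ * B).mulVec Gv - (c₁ : ℂ) • (A₀⁻¹ * Cbar₀).mulVec (u y)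
          + B⁻¹.mulVec ((Cbar₁ y).mulVec (u y))‖
        ≤ ‖(c₁ : ℂ) • (A₀⁻¹ * B).mulVec Gv - (c₁ : ℂ) • (A₀⁻¹ * Cbar₀).mulVec (u y)‖
          + ‖B⁻¹.mulVec ((Cbar₁ y).mulVec (u y))‖ := norm_add_le _ _
      _ ≤ (‖(c₁ : ℂ) • (A₀⁻¹ * B).mulVec Gv‖ + ‖(c₁ : ℂ) • (A₀⁻¹ * Cbar₀).mulVec (u y)‖)
          + ‖B⁻¹.mulVec ((Cbar₁ y).mulVec (u y))‖ := by gcongr; exact norm_sub_le _ _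
      _ ≤ (|c₁| * (2 * eN * ‖Gv‖) + |c₁| * (2 * eC * ‖u y‖)) + 2 * eB * (2 * KC * ‖u y‖) := by
          gcongr
      _ = a * ‖u y‖ + b * ‖Gv‖ := by rw [ha, hb']; ring
  exact l2_rel_bound a b ha0 hb0 _ _ u hfc hgc huc hpt
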